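/- With the same setup (w = ∑ λ_n Φ(z_n), λ_n = (â_n − a_n) − i(b̂_n − b_n), reproducing kernel κ Hermitian), the sum ‖w‖²_ℍ + ‖v‖²_ℍ, where v = ∑ λ_n Φ(z_n)* and conjugation satisfies ⟨f*, g*⟩ = conj(⟨f, g⟩), equals 2∑_{n,m} (â_n − a_n)(â_m − a_m) κʳ(z_m, z_n) + 2∑_{n,m} (b̂_n − b_n)(b̂_m − b_m) κʳ(z_m, z_n); i.e., the cross terms involving κⁱ cancel. -/

import Mathlib

/-!
Expanding both squared norms as Gram sums gives `‖w‖² + ‖v‖² = Re ∑ conj λₘ λₙ (κₘₙ + conj κₘₙ)`,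
since the conjugation turns the Gram matrix of the `Φ(zₙ)*` into the conjugate of that of the
`Φ(zₙ)`. As `κₘₙ + conj κₘₙ = 2 κʳₘₙ` is real, only `Re (conj λₘ λₙ) = αₘ αₙ + βₘ βₙ` survives,
where `λ = α - iβ`; the imaginary part of the kernel drops out.
-/

open ComplexConjugate

section Gram

variable {𝕜 E ι : Type*} [RCLike 𝕜] [NormedAddCommGroup E] [InnerProductSpace 𝕜 E]

theorem inner_sum_smul_sum_smul_self (s : Finset ι) (c : ι → 𝕜) (e : ι → E) :
    inner 𝕜 (∑ i ∈ s, c i • e i) (∑ i ∈ s, c i • e i) =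
      ∑ i ∈ s, ∑ j ∈ s, conj (c i) * c j * inner 𝕜 (e i) (e j) := by
  rw [sum_inner]
  refine Finset.sum_congr rfl fun i _ => ?_
  rw [inner_smul_left, inner_sum, Finset.mul_sum]
  refine Finset.sum_congr rfl fun j _ => ?_
  rw [inner_smul_right, mul_assoc]

theorem norm_sum_smul_sq (s : Finset ι) (c : ι → 𝕜) (e : ι → E) :
    ‖∑ i ∈ s, c i • e i‖ ^ 2 =
      RCLike.re (∑ i ∈ s, ∑ j ∈ s, conj (c i) * c j * inner 𝕜 (e i) (e j)) := by
  rw [← inner_sum_smul_sum_smul_self, inner_self_eq_norm_sq]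

end Gram

namespace Complex

theorem re_mul_add_re_mul_conj (x k : ℂ) : (x * k).re + (x * conj k).re = 2 * x.re * k.re := by
  simp only [mul_re, conj_re, conj_im]
  ring

theorem re_conj_mul_of_sub_I_mul (α β α' β' : ℝ) :
    (conj ((α : ℂ) - I * β) * ((α' : ℂ) - I * β')).re = α * α' + β * β' := by
  simp only [mul_re, conj_re, conj_im, sub_re, sub_im, ofReal_re, ofReal_im, I_re, I_im,
    mul_im]
  ring

end Complex

theorem stmt_12_general {HC X : Type*} [NormedAddCommGroup HC] [InnerProductSpace ℂ HC]
    (J : HC → HC)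
    (hJinner : ∀ f g : HC, (inner ℂ (J f) (J g) : ℂ) = starRingEnd ℂ (inner ℂ f g : ℂ))
    (κ : X → X → ℂ)
    (Φ : X → HC) (N : ℕ) (z : Fin N → X)
    (hrepr : ∀ n m : Fin N, (inner ℂ (Φ (z m)) (Φ (z n)) : ℂ) = κ (z m) (z n))
    (a ahat b bhat : Fin N → ℝ) (lam : Fin N → ℂ)
    (hlam : ∀ n, lam n = ((ahat n - a n : ℝ) : ℂ) - Complex.I * ((bhat n - b n : ℝ) : ℂ))
    (w v : HC) (hw : w = ∑ n, lam n • Φ (z n)) (hv : v = ∑ n, lam n • J (Φ (z n))) :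
    ‖w‖ ^ 2 + ‖v‖ ^ 2 =
      2 * (∑ n, ∑ m, (ahat n - a n) * (ahat m - a m) * (κ (z m) (z n)).re) +
      2 * (∑ n, ∑ m, (bhat n - b n) * (bhat m - b m) * (κ (z m) (z n)).re) := by
  have hw_sq : ‖w‖ ^ 2 = ∑ m, ∑ n, (conj (lam m) * lam n * κ (z m) (z n)).re := by
    simp only [hw, norm_sum_smul_sq, hrepr, RCLike.re_to_complex, Complex.re_sum]
  have hv_sq : ‖v‖ ^ 2 = ∑ m, ∑ n, (conj (lam m) * lam n * conj (κ (z m) (z n))).re := by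
    simp only [hv, norm_sum_smul_sq, hJinner, hrepr, RCLike.re_to_complex, Complex.re_sum]
  rw [hw_sq, hv_sq]
  simp only [← Finset.sum_add_distrib, Finset.mul_sum]
  rw [Finset.sum_comm]
  refine Finset.sum_congr rfl fun n _ => Finset.sum_congr rfl fun m _ => ?_
  rw [Complex.re_mul_add_re_mul_conj, hlam m, hlam n, Complex.re_conj_mul_of_sub_I_mul]
  ring

theorem stmt_12 {HC X : Type*} [NormedAddCommGroup HC] [InnerProductSpace ℂ HC]
    [CompleteSpace HC]
    (J : HC → HC)
    (hJadd : ∀ f g, J (f + g) = J f + J g)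
    (hJsmul : ∀ (c : ℂ) (f : HC), J (c • f) = (starRingEnd ℂ c) • J f)
    (hJinv : ∀ f, J (J f) = f)
    (hJinner : ∀ f g : HC, (inner ℂ (J f) (J g) : ℂ) = starRingEnd ℂ (inner ℂ f g : ℂ))
    (κ : X → X → ℂ) (hherm : ∀ z z', κ z z' = starRingEnd ℂ (κ z' z))
    (Φ : X → HC) (N : ℕ) (z : Fin N → X)
    (hrepr : ∀ n m : Fin N, (inner ℂ (Φ (z m)) (Φ (z n)) : ℂ) = κ (z m) (z n))
    (a ahat b bhat : Fin N → ℝ) (lam : Fin N → ℂ)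
    (hlam : ∀ n, lam n = ((ahat n - a n : ℝ) : ℂ) - Complex.I * ((bhat n - b n : ℝ) : ℂ))
    (w v : HC) (hw : w = ∑ n, lam n • Φ (z n)) (hv : v = ∑ n, lam n • J (Φ (z n))) :
    ‖w‖ ^ 2 + ‖v‖ ^ 2 =
      2 * (∑ n, ∑ m, (ahat n - a n) * (ahat m - a m) * (κ (z m) (z n)).re) +
      2 * (∑ n, ∑ m, (bhat n - b n) * (bhat m - b m) * (κ (z m) (z n)).re) :=
  stmt_12_general J hJinner κ Φ N z hrepr a ahat b bhat lam hlam w v hw hv
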